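/- Let c, D > 0, let ε ∈ (0,1), and let μ satisfy 0 ≤ μ ≤ (c/(2D))·√(1 − (1−ε)²). Then for every t ≥ 0, H̃₁(μ,t) ≥ exp(−(c²/(2D))·ε·t). -/
import Mathlib


open MeasureTheory Real Set

/-- `H̃₁(μ,t)` for the subcritical regime `0 ≤ μ < c/(2D)`. -/
noncomputable def Htilde1 (c D μ t : ℝ) : ℝ :=
  Real.exp (-(c ^ 2 * t) / (2 * D)) *
    (Real.cosh (c * t * Real.sqrt (c ^ 2 / (4 * D ^ 2) - μ ^ 2)) +
      c / (2 * D * Real.sqrt (c ^ 2 / (4 * D ^ 2) - μ ^ 2)) *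
        Real.sinh (c * t * Real.sqrt (c ^ 2 / (4 * D ^ 2) - μ ^ 2)))

/-- `H̃₂(μ,t)` for the supercritical regime `μ > c/(2D)`. -/
noncomputable def Htilde2 (c D μ t : ℝ) : ℝ :=
  Real.exp (-(c ^ 2 * t) / (2 * D)) *
    (Real.cos (c * t * Real.sqrt (μ ^ 2 - c ^ 2 / (4 * D ^ 2))) +
      c / (2 * D * Real.sqrt (μ ^ 2 - c ^ 2 / (4 * D ^ 2))) *
        Real.sin (c * t * Real.sqrt (μ ^ 2 - c ^ 2 / (4 * D ^ 2))))

/-- `H̃(μ,t)`, pieced together from `H̃₁`, the value at `μ = c/(2D)`, and `H̃₂`. -/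
noncomputable def Htilde (c D μ t : ℝ) : ℝ :=
  if μ < c / (2 * D) then Htilde1 c D μ t
  else if μ = c / (2 * D) then Real.exp (-(c ^ 2 * t) / (2 * D)) * (1 + c ^ 2 * t / (2 * D))
  else Htilde2 c D μ t

/-- For `ε ∈ (0,1)` and `0 ≤ μ ≤ (c/(2D))√(1−(1−ε)²)`,
`H̃₁(μ,t) ≥ exp(−(c²/(2D)) ε t)` for all `t ≥ 0`. -/
theorem Htilde1_lower_bound
    (c D ε μ : ℝ) (hc : 0 < c) (hD : 0 < D) (hε0 : 0 < ε) (hε1 : ε < 1)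
    (hμ0 : 0 ≤ μ) (hμ : μ ≤ c / (2 * D) * Real.sqrt (1 - (1 - ε) ^ 2)) :
    ∀ t : ℝ, 0 ≤ t → Htilde1 c D μ t ≥ Real.exp (-(c ^ 2 / (2 * D)) * ε * t) := by
  intro t ht
  set A : ℝ := c ^ 2 / (4 * D ^ 2) - μ ^ 2 with hA
  set s : ℝ := Real.sqrt A with hs
  have h1ε : (0:ℝ) < 1 - ε := by linarith
  have hr : (0:ℝ) ≤ 1 - (1 - ε) ^ 2 := by nlinarith
  have hμ2 : μ ^ 2 ≤ c ^ 2 / (4 * D ^ 2) * (1 - (1 - ε) ^ 2) := by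
    have h1 : μ ^ 2 ≤ (c / (2 * D) * Real.sqrt (1 - (1 - ε) ^ 2)) ^ 2 :=
      pow_le_pow_left₀ hμ0 hμ 2
    have h2 : Real.sqrt (1 - (1 - ε) ^ 2) ^ 2 = 1 - (1 - ε) ^ 2 := Real.sq_sqrt hr
    calc μ ^ 2 ≤ (c / (2 * D) * Real.sqrt (1 - (1 - ε) ^ 2)) ^ 2 := h1
      _ = (c / (2 * D)) ^ 2 * (Real.sqrt (1 - (1 - ε) ^ 2)) ^ 2 := by ring
      _ = c ^ 2 / (4 * D ^ 2) * (1 - (1 - ε) ^ 2) := by rw [h2]; ring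
  have hAlb : (c / (2 * D) * (1 - ε)) ^ 2 ≤ A := by
    have h3 : (c / (2 * D) * (1 - ε)) ^ 2 = c ^ 2 / (4 * D ^ 2) * (1 - ε) ^ 2 := by
      ring
    rw [h3, hA]; nlinarith
  have hclb : (0:ℝ) ≤ c / (2 * D) * (1 - ε) := by positivity
  have hslb : c / (2 * D) * (1 - ε) ≤ s := by
    rw [hs, show c / (2 * D) * (1 - ε) = Real.sqrt ((c / (2 * D) * (1 - ε)) ^ 2) from
      (Real.sqrt_sq hclb).symm]
    exact Real.sqrt_le_sqrt hAlb
  have hspos : 0 < s := lt_of_lt_of_le (by positivity) hslb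
  have hsub : s ≤ c / (2 * D) := by
    rw [hs, show c / (2 * D) = Real.sqrt ((c / (2 * D)) ^ 2) from
      (Real.sqrt_sq (by positivity)).symm]
    apply Real.sqrt_le_sqrt
    rw [hA]
    have : (c / (2 * D)) ^ 2 = c ^ 2 / (4 * D ^ 2) := by ring
    nlinarith
  have hcoef : 1 ≤ c / (2 * D * s) := by
    rw [one_le_div (by positivity)]
    exact (le_div_iff₀' (by positivity : (0:ℝ) < 2 * D)).mp hsub
  have hsinh : 0 ≤ Real.sinh (c * t * s) := by
    rw [Real.sinh_eq]
    have hx : (0:ℝ) ≤ c * t * s := by positivity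
    have := Real.exp_le_exp.mpr (neg_le_self hx)
    linarith
  have hkey : Real.exp (c * t * s) ≤
      Real.cosh (c * t * s) + c / (2 * D * s) * Real.sinh (c * t * s) := by
    rw [← Real.cosh_add_sinh (c * t * s)]
    have := le_mul_of_one_le_left hsinh hcoef
    linarith
  have hexp : Real.exp (-(c ^ 2 / (2 * D)) * ε * t) ≤
      Real.exp (-(c ^ 2 * t) / (2 * D)) * Real.exp (c * t * s) := by
    rw [← Real.exp_add, Real.exp_le_exp]
    have h2 : c / (2 * D) * (1 - ε) * (c * t) ≤ c * t * s := by
      rw [mul_comm (c * t) s]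
      exact mul_le_mul_of_nonneg_right hslb (by positivity)
    have heq : -(c ^ 2 / (2 * D)) * ε * t
        = -(c ^ 2 * t) / (2 * D) + c / (2 * D) * (1 - ε) * (c * t) := by
      field_simp; ring
    linarith
  calc Real.exp (-(c ^ 2 / (2 * D)) * ε * t)
      ≤ Real.exp (-(c ^ 2 * t) / (2 * D)) * Real.exp (c * t * s) := hexp
    _ ≤ Htilde1 c D μ t := by
        unfold Htilde1
        exact mul_le_mul_of_nonneg_left hkey (Real.exp_pos _).le
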